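/- arXiv:1806.08154 — 2 statements merged into one kernel-verified Lean document; each statement's English description precedes it below -/
import Mathlib

section
/- Let H be a linear hypergraph with n edges and let v be a vertex of degree m ≥ n/2 incident to edges E_1, …, E_m. Then each edge of H contains at most ⌊(n/2)/(d−1)⌋ vertices of degree d ≥ 2 that avoid E_1 ∪ ⋯ ∪ E_m. -/
/-- Let `H` be a linear hypergraph with `n` edges and `v` a vertex
of degree `m ≥ n/2` incident to the distinct edges `E (f 0), …, E (f (m-1))`.
Then each edge of `H` contains at most `⌊(n/2)/(d−1)⌋ = n / (2(d-1))` vertices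
of degree `d ≥ 2` avoiding `E (f 0) ∪ ⋯ ∪ E (f (m-1))`. -/
theorem stmt_11 {V : Type*} [Fintype V] [DecidableEq V] (n m d : ℕ) (hd : 2 ≤ d)
    (hm : (n : ℝ) / 2 ≤ m)
    (E : Fin n → Finset V)
    (linear : ∀ i j : Fin n, i ≠ j → ((E i) ∩ (E j)).card ≤ 1)
    (v : V) (hdeg : (Finset.univ.filter (fun i => v ∈ E i)).card = m)
    (f : Fin m → Fin n) (hinj : Function.Injective f)
    (hv : ∀ j : Fin m, v ∈ E (f j)) :
    ∀ i : Fin n,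
      ((E i).filter (fun u =>
          (Finset.univ.filter (fun j => u ∈ E j)).card = d ∧
          ∀ j : Fin m, u ∉ E (f j))).card ≤ n / (2 * (d - 1)) := by
  intro i
  classical
  set S := (E i).filter (fun u =>
      (Finset.univ.filter (fun j => u ∈ E j)).card = d ∧
      ∀ j : Fin m, u ∉ E (f j)) with hS
  -- edges through u other than i
  set T : V → Finset (Fin n) := fun u =>
    (Finset.univ.filter (fun j => u ∈ E j)).erase i with hT
  have hmemS : ∀ u ∈ S, u ∈ E i ∧
      (Finset.univ.filter (fun j => u ∈ E j)).card = d ∧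
      ∀ j : Fin m, u ∉ E (f j) := by
    intro u hu
    simpa [hS, Finset.mem_filter] using hu
  have hcardT : ∀ u ∈ S, (T u).card = d - 1 := by
    intro u hu
    obtain ⟨h1, h2, _⟩ := hmemS u hu
    rw [hT]
    rw [Finset.card_erase_of_mem (by simp [h1]), h2]
  -- T u avoids image of f
  have havoid : ∀ u ∈ S, ∀ j ∈ T u, j ∉ Finset.univ.image f := by
    intro u hu j hj hjim
    obtain ⟨_, _, h3⟩ := hmemS u hu
    obtain ⟨k, _, rfl⟩ := Finset.mem_image.mp hjim
    have : u ∈ E (f k) := (Finset.mem_filter.mp (Finset.mem_erase.mp hj).2).2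
    exact h3 k this
  -- pairwise disjoint
  have hdisj : ∀ u ∈ S, ∀ u' ∈ S, u ≠ u' → Disjoint (T u) (T u') := by
    intro u hu u' hu' hne
    rw [Finset.disjoint_left]
    intro j hj hj'
    obtain ⟨hji, hjmem⟩ := Finset.mem_erase.mp hj
    obtain ⟨_, hjmem'⟩ := Finset.mem_erase.mp hj'
    have hu1 := (hmemS u hu).1
    have hu1' := (hmemS u' hu').1
    have hsub : {u, u'} ⊆ E i ∩ E j := by
      intro x hx
      rcases Finset.mem_insert.mp hx with rfl | hx
      · exact Finset.mem_inter.mpr ⟨hu1, (Finset.mem_filter.mp hjmem).2⟩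
      · rw [Finset.mem_singleton] at hx; subst hx
        exact Finset.mem_inter.mpr ⟨hu1', (Finset.mem_filter.mp hjmem').2⟩
    have h2le : 2 ≤ (E i ∩ E j).card := by
      calc 2 = ({u, u'} : Finset V).card := (Finset.card_pair hne).symm
        _ ≤ _ := Finset.card_le_card hsub
    have := linear i j (Ne.symm hji)
    omega
  -- count
  have hbiU : S.card * (d - 1) ≤ n - m := by
    have hcard : (S.biUnion T).card = S.card * (d - 1) := by
      rw [Finset.card_biUnion hdisj]
      rw [Finset.sum_congr rfl hcardT, Finset.sum_const, smul_eq_mul]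
    have hsub : S.biUnion T ⊆ Finset.univ \ Finset.univ.image f := by
      intro j hj
      obtain ⟨u, hu, hju⟩ := Finset.mem_biUnion.mp hj
      exact Finset.mem_sdiff.mpr ⟨Finset.mem_univ _, havoid u hu j hju⟩
    have hcardc : (Finset.univ \ Finset.univ.image f : Finset (Fin n)).card = n - m := by
      rw [Finset.card_sdiff_of_subset (Finset.subset_univ _),
        Finset.card_image_of_injective _ hinj]
      simp
    calc S.card * (d - 1) = (S.biUnion T).card := hcard.symm
      _ ≤ _ := Finset.card_le_card hsub
      _ = n - m := hcardc
  have hnm : n ≤ 2 * m := by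
    have : (n : ℝ) ≤ 2 * m := by linarith
    exact_mod_cast this
  rw [Nat.le_div_iff_mul_le (by omega : 0 < 2 * (d - 1))]
  calc S.card * (2 * (d - 1)) = 2 * (S.card * (d - 1)) := by ring
    _ ≤ 2 * (n - m) := by omega
    _ ≤ n := by omega
end

section
/- Let H be a linear hypergraph with n edges. In a greedy coloring processing vertices in non-increasing order of degree, when a vertex v of degree k ≥ 4 is about to be colored, the number of colors already used on vertices lying in edges incident with v is at most k·(⌊(n−1)/(k−1)⌋ − 1); in particular if this quantity is less than ⌈1.25n⌉ then a free color exists for v. -/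
/-!
Fix an edge `e` through `v`. Each vertex `u ∈ e` of degree at least `k` lies in at least `k - 1`
edges other than `e`, and by linearity these sets of other edges are pairwise disjoint for distinct
`u ∈ e`. Hence `e` holds at most `(n - 1) / (k - 1)` vertices of degree at least `k`; one of them
is `v`, so at most `(n - 1) / (k - 1) - 1` are coloured. Summing over the `k` edges through `v`
bounds the colours seen by `v`, and fewer than `⌈1.25 n⌉` colours leave one of them free.
-/

open Finset

namespace Hypergraph

variable {ι V : Type*} [Fintype ι] [DecidableEq V]

def IsLinear (E : ι → Finset V) : Prop :=
  ∀ i j, i ≠ j → #(E i ∩ E j) ≤ 1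

def incidentEdges (E : ι → Finset V) (u : V) : Finset ι :=
  univ.filter (fun i => u ∈ E i)

theorem mem_incidentEdges {E : ι → Finset V} {u : V} {i : ι} :
    i ∈ incidentEdges E u ↔ u ∈ E i := by
  simp [incidentEdges]

variable [DecidableEq ι]

theorem IsLinear.disjoint_erase_incidentEdges {E : ι → Finset V} (hE : IsLinear E) {i : ι}
    {u u' : V} (hu : u ∈ E i) (hu' : u' ∈ E i) (hne : u ≠ u') :
    Disjoint ((incidentEdges E u).erase i) ((incidentEdges E u').erase i) := by
  rw [disjoint_left]
  intro j hj hj'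
  rw [mem_erase, mem_incidentEdges] at hj hj'
  have hpair : ({u, u'} : Finset V) ⊆ E i ∩ E j := by
    simp [insert_subset_iff, hu, hu', hj.2, hj'.2]
  have := (card_le_card hpair).trans (hE i j (Ne.symm hj.1))
  rw [card_pair hne] at this
  omega

theorem IsLinear.card_mul_pred_le {E : ι → Finset V} (hE : IsLinear E) {k : ℕ} {i : ι}
    {A : Finset V} (hA : A ⊆ E i) (hdeg : ∀ u ∈ A, k ≤ #(incidentEdges E u)) :
    #A * (k - 1) ≤ Fintype.card ι - 1 := by
  have hdisj : (A : Set V).PairwiseDisjoint (fun u => (incidentEdges E u).erase i) :=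
    fun u hu u' hu' hne => hE.disjoint_erase_incidentEdges (hA hu) (hA hu') hne
  calc #A * (k - 1) = ∑ _u ∈ A, (k - 1) := by rw [sum_const, smul_eq_mul]
    _ ≤ ∑ u ∈ A, #((incidentEdges E u).erase i) :=
        sum_le_sum fun u hu => by
          have := pred_card_le_card_erase (s := incidentEdges E u) (a := i)
          have := hdeg u hu
          omega
    _ = #(A.biUnion fun u => (incidentEdges E u).erase i) := (card_biUnion hdisj).symm
    _ ≤ #(univ.erase i) := card_le_card <| biUnion_subset.mpr fun u _ =>
        erase_subset_erase i (subset_univ _)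
    _ = Fintype.card ι - 1 := by rw [card_erase_of_mem (mem_univ i), card_univ]

theorem IsLinear.card_inter_le {E : ι → Finset V} (hE : IsLinear E) {k : ℕ} (hk : 2 ≤ k)
    {S : Finset V} (hS : ∀ u ∈ S, k ≤ #(incidentEdges E u)) {v : V} (hvS : v ∉ S)
    (hv : k ≤ #(incidentEdges E v)) {i : ι} (hvi : v ∈ E i) :
    #(E i ∩ S) ≤ (Fintype.card ι - 1) / (k - 1) - 1 := by
  have hsub : insert v (E i ∩ S) ⊆ E i := insert_subset hvi inter_subset_left
  have hdeg : ∀ u ∈ insert v (E i ∩ S), k ≤ #(incidentEdges E u) := by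
    simp only [mem_insert, mem_inter]
    rintro u (rfl | ⟨-, hu⟩)
    exacts [hv, hS u hu]
  have hcount := hE.card_mul_pred_le hsub hdeg
  rw [card_insert_of_notMem (by simp [hvS])] at hcount
  have := (Nat.le_div_iff_mul_le (by omega)).mpr hcount
  omega

theorem IsLinear.card_filter_exists_mem_le {E : ι → Finset V} (hE : IsLinear E) {k : ℕ}
    (hk : 2 ≤ k) {S : Finset V} (hS : ∀ u ∈ S, k ≤ #(incidentEdges E u)) {v : V} (hvS : v ∉ S)
    (hv : k ≤ #(incidentEdges E v)) [DecidablePred fun u => ∃ i, v ∈ E i ∧ u ∈ E i] :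
    #(S.filter fun u => ∃ i, v ∈ E i ∧ u ∈ E i) ≤
      #(incidentEdges E v) * ((Fintype.card ι - 1) / (k - 1) - 1) := by
  have hsub : (S.filter fun u => ∃ i, v ∈ E i ∧ u ∈ E i) ⊆
      (incidentEdges E v).biUnion fun i => E i ∩ S := by
    intro u hu
    obtain ⟨huS, i, hvi, hui⟩ := mem_filter.mp hu
    exact mem_biUnion.mpr ⟨i, mem_incidentEdges.mpr hvi, mem_inter.mpr ⟨hui, huS⟩⟩
  refine (card_le_card hsub).trans (card_biUnion_le_card_mul _ _ _ fun i hi => ?_)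
  exact hE.card_inter_le hk hS hvS hv (mem_incidentEdges.mp hi)

end Hypergraph

theorem Finset.exists_lt_notMem_of_card_lt {s : Finset ℕ} {N : ℕ} (h : #s < N) :
    ∃ m < N, m ∉ s := by
  obtain ⟨m, hm, hms⟩ := exists_mem_notMem_of_card_lt_card (t := range N) (by simpa using h)
  exact ⟨m, mem_range.mp hm, hms⟩

open Hypergraph

theorem stmt_14_general {V : Type*} [DecidableEq V] (n k : ℕ) (hk : 4 ≤ k)
    (E : Fin n → Finset V)
    (linear : ∀ i j : Fin n, i ≠ j → ((E i) ∩ (E j)).card ≤ 1)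
    (colored : Finset V) (c : V → ℕ)
    (hcolored : ∀ u ∈ colored, k ≤ (Finset.univ.filter (fun i => u ∈ E i)).card)
    (v : V) (hv : v ∉ colored)
    (hdeg : (Finset.univ.filter (fun i => v ∈ E i)).card = k) :
    ((colored.filter (fun u => ∃ i : Fin n, v ∈ E i ∧ u ∈ E i)).image c).card
        ≤ k * ((n - 1) / (k - 1) - 1) ∧
      (k * ((n - 1) / (k - 1) - 1) < ⌈(1.25 : ℝ) * n⌉₊ →
        ∃ col < ⌈(1.25 : ℝ) * n⌉₊, ∀ u ∈ colored,
          (∃ i : Fin n, v ∈ E i ∧ u ∈ E i) → c u ≠ col) := by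
  have hE : IsLinear E := linear
  have hdegv : #(incidentEdges E v) = k := hdeg
  have hcount := hE.card_filter_exists_mem_le (by omega) hcolored hv hdegv.ge
  rw [hdegv, Fintype.card_fin] at hcount
  have hcolours := (card_image_le (f := c)).trans hcount
  refine ⟨hcolours, fun hlt => ?_⟩
  obtain ⟨col, hcol, hfree⟩ := exists_lt_notMem_of_card_lt (hcolours.trans_lt hlt)
  refine ⟨col, hcol, fun u hu hadj hc => hfree ?_⟩
  exact hc ▸ Finset.mem_image_of_mem c (mem_filter.mpr ⟨hu, hadj⟩)

/-- In a greedy coloring of a linear hypergraph with `n` edges,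
processing vertices in non-increasing degree order, when a vertex `v` of degree
`k ≥ 4` is about to be colored (so every already-colored vertex has degree
`≥ k`), the number of colors already used on colored vertices lying in edges
through `v` is at most `k·(⌊(n−1)/(k−1)⌋ − 1)`; in particular if this quantity
is less than `⌈1.25n⌉` then a free color `< ⌈1.25n⌉` exists for `v`. -/
theorem stmt_14 {V : Type*} [Fintype V] [DecidableEq V] (n k : ℕ) (hk : 4 ≤ k)
    (E : Fin n → Finset V)
    (linear : ∀ i j : Fin n, i ≠ j → ((E i) ∩ (E j)).card ≤ 1)
    (colored : Finset V) (c : V → ℕ)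
    (hcolored : ∀ u ∈ colored, k ≤ (Finset.univ.filter (fun i => u ∈ E i)).card)
    (v : V) (hv : v ∉ colored)
    (hdeg : (Finset.univ.filter (fun i => v ∈ E i)).card = k) :
    ((colored.filter (fun u => ∃ i : Fin n, v ∈ E i ∧ u ∈ E i)).image c).card
        ≤ k * ((n - 1) / (k - 1) - 1) ∧
      (k * ((n - 1) / (k - 1) - 1) < ⌈(1.25 : ℝ) * n⌉₊ →
        ∃ col < ⌈(1.25 : ℝ) * n⌉₊, ∀ u ∈ colored,
          (∃ i : Fin n, v ∈ E i ∧ u ∈ E i) → c u ≠ col) :=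
  stmt_14_general n k hk E linear colored c hcolored v hv hdeg
end
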